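/- arXiv:2509.07004 — 2 statements merged into one kernel-verified Lean document; each statement's English description precedes it below -/
import Mathlib

section
/- For every prime p and every positive integer n, the restricted totient sum Δ(n,p) satisfies the identity Δ(n,p) = (p-1) · Σ_{α=1}^{⌊log n / log p⌋} Ψ(⌊n/p^α⌋), where Ψ(x) = Σ_{k≤x} φ(k). -/
/-!
Write each multiple of `p` up to `n` as `p * j` with `j ≤ n / p`. Since
`φ(p j) = (p - 1) φ(j) + [p ∣ j] φ(j)`, this gives the recursion
`Δ(n, p) = (p - 1) Ψ(n / p) + Δ(n / p, p)`, which unfolds `⌊log_p n⌋` times before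
`n / p^α < p` makes `Δ` vanish.
-/

open Finset

/-- `Ψ(x) = Σ_{k ≤ x} φ(k)` for a natural number argument. -/
def Psi (x : ℕ) : ℕ := ∑ k ∈ Finset.Icc 1 x, Nat.totient k

/-- `Δ(n,p) = Σ_{k ≤ n, p ∣ k} φ(k)`. -/
def Delta (n p : ℕ) : ℕ := ∑ k ∈ (Finset.Icc 1 n).filter (fun k => p ∣ k), Nat.totient k

lemma Finset.Icc_filter_dvd_eq_image_mul {p : ℕ} (hp : 0 < p) (n : ℕ) :
    {k ∈ Icc 1 n | p ∣ k} = (Icc 1 (n / p)).image (p * ·) := by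
  ext k
  simp only [mem_filter, mem_Icc, mem_image]
  constructor
  · rintro ⟨⟨hk, hkn⟩, j, rfl⟩
    exact ⟨j, ⟨Nat.pos_of_mul_pos_left hk, (Nat.le_div_iff_mul_le hp).2 (by linarith)⟩, rfl⟩
  · rintro ⟨j, ⟨hj, hjn⟩, rfl⟩
    exact ⟨⟨Nat.mul_pos hp hj, (Nat.mul_le_mul_left p hjn).trans (Nat.mul_div_le n p)⟩, j, rfl⟩

lemma delta_eq_sum_totient_mul {p : ℕ} (hp : 0 < p) (n : ℕ) :
    Delta n p = ∑ j ∈ Icc 1 (n / p), Nat.totient (p * j) := by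
  rw [Delta, Finset.Icc_filter_dvd_eq_image_mul hp,
    sum_image fun _ _ _ _ h => Nat.eq_of_mul_eq_mul_left hp h]

lemma Nat.totient_prime_mul {p : ℕ} (hp : p.Prime) (j : ℕ) :
    (p * j).totient = (p - 1) * j.totient + if p ∣ j then j.totient else 0 := by
  by_cases h : p ∣ j
  · rw [Nat.totient_mul_of_prime_of_dvd hp h, if_pos h, ← add_one_mul,
      Nat.sub_one_add_one hp.ne_zero]
  · rw [Nat.totient_mul ((Nat.Prime.coprime_iff_not_dvd hp).2 h), Nat.totient_prime hp,
      if_neg h, add_zero]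

lemma delta_eq_mul_psi_add_delta {p : ℕ} (hp : p.Prime) (n : ℕ) :
    Delta n p = (p - 1) * Psi (n / p) + Delta (n / p) p := by
  rw [delta_eq_sum_totient_mul hp.pos, Psi, Delta, mul_sum, sum_filter, ← sum_add_distrib]
  exact sum_congr rfl fun j _ => Nat.totient_prime_mul hp j

lemma delta_eq_zero_of_lt {p n : ℕ} (hn : n < p) : Delta n p = 0 :=
  sum_eq_zero fun k hk => by
    simp only [mem_filter, mem_Icc] at hk
    exact absurd (Nat.le_of_dvd hk.1.1 hk.2) (by omega)

lemma delta_eq_of_lt_pow {p : ℕ} (hp : p.Prime) (B : ℕ) :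
    ∀ n < p ^ (B + 1), Delta n p = (p - 1) * ∑ α ∈ range B, Psi (n / p ^ (α + 1)) := by
  induction B with
  | zero => simpa using fun n => delta_eq_zero_of_lt
  | succ B ih =>
    intro n hn
    have hdiv : n / p < p ^ (B + 1) := by
      rwa [Nat.div_lt_iff_lt_mul hp.pos, ← pow_succ]
    simp only [delta_eq_mul_psi_add_delta hp n, ih _ hdiv, sum_range_succ' _ B, zero_add,
      pow_one, Nat.div_div_eq_div_mul, ← pow_succ', mul_add, add_comm]

theorem stmt_0_general (p n : ℕ) (hp : p.Prime) :
    Delta n p =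
      (p - 1) *
        ∑ α ∈ Finset.Icc 1 ⌊Real.log n / Real.log p⌋₊, Psi (n / p ^ α) := by
  rw [Real.log_div_log, Real.natFloor_logb_natCast,
    delta_eq_of_lt_pow hp _ n (Nat.lt_pow_succ_log_self hp.one_lt n),
    ← Finset.Ico_add_one_right_eq_Icc, sum_Ico_eq_sum_range, Nat.add_sub_cancel]
  simp only [add_comm 1]

/-- For every prime `p` and positive integer `n`,
`Δ(n,p) = (p-1) · Σ_{α=1}^{⌊log n / log p⌋} Ψ(⌊n / p^α⌋)`. -/
theorem stmt_0 (p n : ℕ) (hp : p.Prime) (hn : 1 ≤ n) :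
    Delta n p =
      (p - 1) *
        ∑ α ∈ Finset.Icc 1 ⌊Real.log n / Real.log p⌋₊, Psi (n / p ^ α) :=
  stmt_0_general p n hp
end

section
/- There exists an absolute constant C > 0 such that for every prime p and every integer n ≥ 2, the restricted totient sum satisfies |Δ(n,p) − 3 n² / (π² (p+1))| ≤ C · n · log n. -/
open Finset

/-!
Since `φ = μ ∗ id`, `Δ(n,p) = Σ_{d ≤ n} μ(d) Σ_{e ≤ n/d, p ∣ de} e`. For a prime `p` the inner
`e` run over the multiples of `s = 1` (if `p ∣ d`) or `s = p` (otherwise), so the inner sum is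
`s` times a Gauss sum, which is `n² / (2 d² s)` up to an error `n / d`. The errors add up to
`n · H_n ≤ n (1 + log n)`, and completing `Σ_{d ≤ n} μ(d) / (d² s)` to the full series costs
`(n² / 2) · (1 / n)`. Splitting the series according to `p ∣ d` and using `μ(p e) = -μ(e)` for
`p ∤ e` expresses it through `Σ μ(d) / d² = 1 / ζ(2) = 6 / π²`; it equals `6 / (π² (p + 1))`.
-/

open Real Filter Topology
open scoped ArithmeticFunction.Moebius

theorem sum_Ioc_sum_divisorsAntidiagonal {M : Type*} [AddCommMonoid M] (F : ℕ → ℕ → M) (N : ℕ) :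
    ∑ k ∈ Ioc 0 N, ∑ x ∈ k.divisorsAntidiagonal, F x.1 x.2 =
      ∑ d ∈ Ioc 0 N, ∑ e ∈ Ioc 0 (N / d), F d e := by
  rw [sum_sigma', sum_sigma']
  refine sum_nbij' (fun x => ⟨x.2.1, x.2.2⟩) (fun x => ⟨x.1 * x.2, (x.1, x.2)⟩)
    ?_ ?_ ?_ (fun _ _ => rfl) (fun _ _ => rfl)
  · rintro ⟨k, d, e⟩ h
    simp only [mem_sigma, mem_Ioc, Nat.mem_divisorsAntidiagonal] at h ⊢
    obtain ⟨⟨hk, hkN⟩, rfl, -⟩ := h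
    refine ⟨⟨Nat.pos_of_mul_pos_right hk, ?_⟩, Nat.pos_of_mul_pos_left hk, ?_⟩
    · exact (Nat.le_mul_of_pos_right d (Nat.pos_of_mul_pos_left hk)).trans hkN
    · exact (Nat.le_div_iff_mul_le (Nat.pos_of_mul_pos_right hk)).2 (by rwa [mul_comm])
  · rintro ⟨d, e⟩ h
    simp only [mem_sigma, mem_Ioc, Nat.mem_divisorsAntidiagonal] at h ⊢
    obtain ⟨⟨hd, -⟩, he, heN⟩ := h
    refine ⟨⟨by positivity, ?_⟩, trivial, by positivity⟩
    rw [mul_comm]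
    exact (Nat.le_div_iff_mul_le hd).1 heN
  · rintro ⟨k, d, e⟩ h
    simp only [mem_sigma, Nat.mem_divisorsAntidiagonal] at h
    rw [← h.2.1]

theorem sum_Ioc_filter_dvd {M : Type*} [AddCommMonoid M] (f : ℕ → M) {q : ℕ} (hq : 0 < q)
    (m : ℕ) : ∑ e ∈ Ioc 0 m with q ∣ e, f e = ∑ j ∈ Ioc 0 (m / q), f (q * j) := by
  symm
  refine sum_nbij' (q * ·) (· / q) ?_ ?_ ?_ ?_ (fun _ _ => rfl)
  · intro j hj
    simp only [mem_filter, mem_Ioc] at hj ⊢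
    refine ⟨⟨Nat.mul_pos hq hj.1, ?_⟩, dvd_mul_right q j⟩
    rw [mul_comm]
    exact (Nat.le_div_iff_mul_le hq).1 hj.2
  · intro e he
    simp only [mem_filter, mem_Ioc] at he ⊢
    obtain ⟨⟨he, heN⟩, j, rfl⟩ := he
    rw [Nat.mul_div_cancel_left j hq]
    exact ⟨Nat.pos_of_mul_pos_left he, (Nat.le_div_iff_mul_le hq).2 (by rwa [mul_comm])⟩
  · intro j _
    simp [hq.ne']
  · intro e he
    exact Nat.mul_div_cancel' (mem_filter.1 he).2

theorem sum_Ioc_natCast (m : ℕ) : ∑ e ∈ Ioc 0 m, (e : ℝ) = m * (m + 1) / 2 := by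
  induction m with
  | zero => simp
  | succ m ih => rw [sum_Ioc_succ_top (Nat.zero_le m), ih]; push_cast; ring

theorem abs_sum_Ioc_natCast_sub_sq_le {m : ℕ} {x : ℝ} (hm : (m : ℝ) ≤ x) (hx : x < m + 1) :
    |∑ e ∈ Ioc 0 m, (e : ℝ) - x ^ 2 / 2| ≤ x := by
  have h0 : (0 : ℝ) ≤ m := m.cast_nonneg
  rw [sum_Ioc_natCast, abs_le]
  constructor <;> nlinarith

theorem abs_sum_Ioc_sub_tsum_le {f : ℕ → ℝ} (hf : ∀ d, |f d| ≤ 1 / (d : ℝ) ^ 2) {n : ℕ}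
    (hn : n ≠ 0) : |∑ d ∈ Ioc 0 n, f d - ∑' d, f d| ≤ 1 / n := by
  have hsum : Summable f :=
    .of_norm_bounded (Real.summable_one_div_nat_pow.2 one_lt_two) hf
  have hf0 : f 0 = 0 := abs_nonpos_iff.1 (by simpa using hf 0)
  have hpartial : Tendsto (fun N => ∑ d ∈ Ioc 0 N, f d) atTop (𝓝 (∑' d, f d)) := by
    refine (hsum.hasSum.tendsto_sum_nat.comp (tendsto_add_atTop_nat 1)).congr fun N => ?_
    rw [Function.comp_apply, range_eq_Ico, Ico_add_one_right_eq_Icc,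
      ← add_sum_Ioc_eq_sum_Icc (Nat.zero_le N), hf0, zero_add]
  have htail : ∀ N, n ≤ N → |∑ d ∈ Ioc 0 n, f d - ∑ d ∈ Ioc 0 N, f d| ≤ 1 / n := by
    intro N hN
    rw [← sum_Ioc_consecutive f (Nat.zero_le n) hN, sub_add_cancel_left, abs_neg]
    calc |∑ d ∈ Ioc n N, f d| ≤ ∑ d ∈ Ioc n N, ((d : ℝ) ^ 2)⁻¹ :=
          (abs_sum_le_sum_abs _ _).trans (sum_le_sum fun d _ => by simpa using hf d)
      _ ≤ (n : ℝ)⁻¹ - (N : ℝ)⁻¹ := sum_Ioc_inv_sq_le_sub hn hN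
      _ ≤ 1 / n := by rw [one_div]; linarith [inv_nonneg.2 (N.cast_nonneg : (0 : ℝ) ≤ N)]
  exact le_of_tendsto ((tendsto_const_nhds.sub hpartial).abs) (eventually_atTop.2 ⟨n, htail⟩)

theorem totient_eq_sum_moebius_mul {k : ℕ} (hk : 0 < k) :
    (k.totient : ℝ) = ∑ x ∈ k.divisorsAntidiagonal, (μ x.1 : ℝ) * x.2 := by
  refine (ArithmeticFunction.sum_eq_iff_sum_mul_moebius_eq (f := fun m => (m.totient : ℝ))
    (g := fun m => (m : ℝ))).1 (fun m _ => ?_) k hk |>.symm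
  exact_mod_cast Nat.sum_totient m

theorem moebius_prime_mul {p : ℕ} (hp : p.Prime) (e : ℕ) :
    μ (p * e) = if p ∣ e then 0 else -μ e := by
  split_ifs with h
  · exact ArithmeticFunction.moebius_eq_zero_of_not_squarefree fun hsq =>
      hp.one_lt.ne' (Nat.isUnit_iff.1 (hsq p (mul_dvd_mul_left p h)))
  · rw [ArithmeticFunction.isMultiplicative_moebius.map_mul_of_coprime
      ((Nat.Prime.coprime_iff_not_dvd hp).2 h), ArithmeticFunction.moebius_apply_prime hp,
      neg_one_mul]

theorem abs_moebius_div_sq_mul_le {s : ℝ} (hs : 1 ≤ s) (d : ℕ) :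
    |(μ d : ℝ) / (d ^ 2 * s)| ≤ 1 / (d : ℝ) ^ 2 := by
  rw [abs_div, abs_of_nonneg (by positivity : (0 : ℝ) ≤ d ^ 2 * s)]
  calc |(μ d : ℝ)| / (d ^ 2 * s) ≤ 1 / (d ^ 2 * s) := by
        gcongr; exact_mod_cast ArithmeticFunction.abs_moebius_le_one
    _ = 1 / (d : ℝ) ^ 2 / s := by rw [div_div]
    _ ≤ 1 / (d : ℝ) ^ 2 := div_le_self (by positivity) hs

theorem tsum_moebius_div_sq : ∑' d : ℕ, (μ d : ℝ) / d ^ 2 = 6 / π ^ 2 := by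
  have hz := ArithmeticFunction.LSeries_zeta_mul_Lseries_moebius (s := 2) (by norm_num)
  rw [ArithmeticFunction.LSeries_zeta_eq_riemannZeta (by norm_num), riemannZeta_two] at hz
  have hL : LSeries (fun n => (μ n : ℂ)) 2 = ((∑' d : ℕ, (μ d : ℝ) / d ^ 2 : ℝ) : ℂ) := by
    rw [Complex.ofReal_tsum, LSeries]
    refine tsum_congr fun n => ?_
    rcases eq_or_ne n 0 with rfl | hn
    · simp [LSeries.term_zero]
    · rw [LSeries.term_of_ne_zero hn, show (2 : ℂ) = ((2 : ℕ) : ℂ) by norm_num,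
        Complex.cpow_natCast]
      push_cast
      ring
  rw [hL] at hz
  have h : π ^ 2 / 6 * ∑' d : ℕ, (μ d : ℝ) / d ^ 2 = 1 := by exact_mod_cast hz
  have := pi_pos
  field_simp at h ⊢
  linarith

def dvdStep (p d : ℕ) : ℕ := if p ∣ d then 1 else p

theorem one_le_dvdStep {p : ℕ} (hp : p.Prime) (d : ℕ) : 1 ≤ dvdStep p d := by
  unfold dvdStep; split_ifs <;> [rfl; exact hp.one_le]

theorem Nat.Prime.dvd_mul_iff_dvdStep_dvd {p : ℕ} (hp : p.Prime) (d e : ℕ) :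
    p ∣ d * e ↔ dvdStep p d ∣ e := by
  unfold dvdStep
  split_ifs with hd
  · simp [hd.mul_right]
  · rw [hp.dvd_mul, or_iff_right hd]

theorem delta_eq_sum_moebius {p : ℕ} (hp : p.Prime) (n : ℕ) :
    (Delta n p : ℝ) = ∑ d ∈ Ioc 0 n, (μ d : ℝ) *
      (dvdStep p d * ∑ j ∈ Ioc 0 (n / (d * dvdStep p d)), (j : ℝ)) := by
  calc (Delta n p : ℝ)
      = ∑ k ∈ Ioc 0 n, ∑ x ∈ k.divisorsAntidiagonal,
          if p ∣ x.1 * x.2 then (μ x.1 : ℝ) * x.2 else 0 := by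
        rw [Delta, ← Icc_add_one_left_eq_Ioc, zero_add, Nat.cast_sum, sum_filter]
        refine sum_congr rfl fun k hk => ?_
        rw [sum_congr rfl fun x hx => by rw [(Nat.mem_divisorsAntidiagonal.1 hx).1]]
        split_ifs
        · exact totient_eq_sum_moebius_mul (mem_Icc.1 hk).1
        · simp
    _ = ∑ d ∈ Ioc 0 n, ∑ e ∈ Ioc 0 (n / d), if p ∣ d * e then (μ d : ℝ) * e else 0 :=
        sum_Ioc_sum_divisorsAntidiagonal (fun d e => if p ∣ d * e then (μ d : ℝ) * e else 0) n
    _ = _ := by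
        refine sum_congr rfl fun d _ => ?_
        simp_rw [hp.dvd_mul_iff_dvdStep_dvd, ← sum_filter, ← mul_sum,
          sum_Ioc_filter_dvd _ (one_le_dvdStep hp d), Nat.div_div_eq_div_mul]
        push_cast
        simp only [mul_sum]

theorem tsum_moebius_div_sq_mul_dvdStep {p : ℕ} (hp : p.Prime) :
    ∑' d : ℕ, (μ d : ℝ) / (d ^ 2 * dvdStep p d) = 6 / (π ^ 2 * (p + 1)) := by
  let f : ℕ → ℝ := fun d => (μ d : ℝ) / d ^ 2
  let S : Set ℕ := {d | p ∣ d}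
  have hf : Summable f := .of_norm_bounded (Real.summable_one_div_nat_pow.2 one_lt_two)
    fun d => by simpa using abs_moebius_div_sq_mul_le le_rfl d
  have hAB : ∑' d : S, f d + ∑' d : ↑Sᶜ, f d = 6 / π ^ 2 :=
    ((hf.subtype S).tsum_add_tsum_compl (hf.subtype Sᶜ)).trans tsum_moebius_div_sq
  have hB : ∑' d : S, f d = -(∑' d : ↑Sᶜ, f d) / p ^ 2 := by
    have hrange : S = Set.range (p * ·) := by
      ext d; simp [S, dvd_iff_exists_eq_mul_right, eq_comm]
    have hmul : ∀ e, f (p * e) = -Sᶜ.indicator f e / p ^ 2 := by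
      intro e
      by_cases he : p ∣ e <;> simp [f, S, he, moebius_prime_mul hp]; ring
    have hmultiples := tsum_range f (mul_right_injective₀ hp.ne_zero)
    rw [← hrange] at hmultiples
    rw [hmultiples, _root_.tsum_subtype]
    simp only [hmul, tsum_div_const, tsum_neg]
  have hg : Summable fun d : ℕ => (μ d : ℝ) / (d ^ 2 * dvdStep p d) :=
    .of_norm_bounded (Real.summable_one_div_nat_pow.2 one_lt_two) fun d =>
      abs_moebius_div_sq_mul_le (by exact_mod_cast one_le_dvdStep hp d) d
  have hsplit : ∑' d : ℕ, (μ d : ℝ) / (d ^ 2 * dvdStep p d) =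
      ∑' d : S, f d + (∑' d : ↑Sᶜ, f d) / p := by
    rw [← (hg.subtype S).tsum_add_tsum_compl (hg.subtype Sᶜ), ← tsum_div_const]
    congr 1 <;> refine tsum_congr fun d => ?_
    · have hd : p ∣ (d : ℕ) := d.2
      simp [f, dvdStep, hd]
    · have hd : ¬p ∣ (d : ℕ) := d.2
      simp [f, dvdStep, hd, div_div]
  have hp1 : (1 : ℝ) < p := by exact_mod_cast hp.one_lt
  have := pi_pos
  rw [hsplit]
  rw [hB] at hAB ⊢
  field_simp at hAB ⊢
  linear_combination hAB

theorem abs_moebius_mul_sum_Ioc_sub_le (n : ℕ) {d s : ℕ} (hd : 0 < d) (hs : 0 < s) :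
    |(μ d : ℝ) * (s * ∑ j ∈ Ioc 0 (n / (d * s)), (j : ℝ)) -
        (n : ℝ) ^ 2 / 2 * ((μ d : ℝ) / (d ^ 2 * s))| ≤ (n : ℝ) / d := by
  set x : ℝ := n / (d * s)
  have hfloor : ⌊x⌋₊ = n / (d * s) := by rw [← Nat.floor_div_eq_div (K := ℝ)]; push_cast; rfl
  have hT := abs_sum_Ioc_natCast_sub_sq_le (hfloor ▸ Nat.floor_le (by positivity))
    (hfloor ▸ Nat.lt_floor_add_one x)
  have hdiff : (μ d : ℝ) * (s * ∑ j ∈ Ioc 0 (n / (d * s)), (j : ℝ)) -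
      n ^ 2 / 2 * ((μ d : ℝ) / (d ^ 2 * s)) =
      (μ d : ℝ) * s * (∑ j ∈ Ioc 0 (n / (d * s)), (j : ℝ) - x ^ 2 / 2) := by
    simp only [x]; field_simp
  rw [hdiff, abs_mul, abs_mul, Nat.abs_cast]
  calc |(μ d : ℝ)| * s * |∑ j ∈ Ioc 0 (n / (d * s)), (j : ℝ) - x ^ 2 / 2| ≤ 1 * s * x := by
        gcongr; exact_mod_cast ArithmeticFunction.abs_moebius_le_one
    _ = n / d := by simp only [x]; field_simp

theorem abs_delta_sub_le {p : ℕ} (hp : p.Prime) (n : ℕ) :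
    |(Delta n p : ℝ) - (n : ℝ) ^ 2 / 2 * ∑ d ∈ Ioc 0 n, (μ d : ℝ) / (d ^ 2 * dvdStep p d)| ≤
      n * (1 + log n) := by
  rw [delta_eq_sum_moebius hp, mul_sum, ← sum_sub_distrib]
  calc _ ≤ ∑ d ∈ Ioc 0 n, (n : ℝ) / d := (abs_sum_le_sum_abs _ _).trans <| sum_le_sum fun d hd =>
        abs_moebius_mul_sum_Ioc_sub_le n (mem_Ioc.1 hd).1 (one_le_dvdStep hp d)
    _ = n * harmonic n := by
        rw [harmonic_eq_sum_Icc, ← Icc_add_one_left_eq_Ioc, zero_add]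
        push_cast
        simp only [mul_sum, div_eq_mul_inv]
    _ ≤ n * (1 + log n) := by gcongr; exact harmonic_le_one_add_log n

/-- There is an absolute constant `C > 0` such that for every prime `p` and integer
`n ≥ 2`, `|Δ(n,p) - 3n²/(π²(p+1))| ≤ C·n·log n`. -/
theorem stmt_9 :
    ∃ C : ℝ, C > 0 ∧ ∀ p : ℕ, p.Prime → ∀ n : ℕ, 2 ≤ n →
      |(Delta n p : ℝ) - 3 * (n : ℝ) ^ 2 / (Real.pi ^ 2 * (p + 1))| ≤
        C * n * Real.log n := by
  refine ⟨10, by norm_num, fun p hp n hn => ?_⟩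
  set S := ∑ d ∈ Ioc 0 n, (μ d : ℝ) / (d ^ 2 * dvdStep p d)
  have htail : |(n : ℝ) ^ 2 / 2 * S - 3 * (n : ℝ) ^ 2 / (π ^ 2 * (p + 1))| ≤ (n : ℝ) / 2 := by
    have h : |S - 6 / (π ^ 2 * (p + 1))| ≤ 1 / (n : ℝ) := by
      rw [← tsum_moebius_div_sq_mul_dvdStep hp]
      exact abs_sum_Ioc_sub_tsum_le (fun d => abs_moebius_div_sq_mul_le
        (s := dvdStep p d) (by exact_mod_cast one_le_dvdStep hp d) d) (by omega)
    calc _ = |(n : ℝ) ^ 2 / 2 * (S - 6 / (π ^ 2 * (p + 1)))| := by ring_nf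
      _ = (n : ℝ) ^ 2 / 2 * |S - 6 / (π ^ 2 * (p + 1))| := by
          rw [abs_mul, abs_of_pos (by positivity)]
      _ ≤ (n : ℝ) ^ 2 / 2 * (1 / n) := by gcongr
      _ = n / 2 := by field_simp
  have hlog : 0.69 < log n := by
    have := log_le_log two_pos (show (2 : ℝ) ≤ n by exact_mod_cast hn)
    linarith [log_two_gt_d9]
  calc _ ≤ |(Delta n p : ℝ) - (n : ℝ) ^ 2 / 2 * S| +
        |(n : ℝ) ^ 2 / 2 * S - 3 * (n : ℝ) ^ 2 / (π ^ 2 * (p + 1))| := abs_sub_le _ _ _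
    _ ≤ n * (1 + log n) + n / 2 := add_le_add (abs_delta_sub_le hp n) htail
    _ ≤ 10 * n * log n := by nlinarith
end
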